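/- arXiv:math/0304238 — 6 statements merged into one kernel-verified Lean document; each statement's English description precedes it below -/
import Mathlib

section
/- Let U ⊆ ℝ^m be open and convex and let L : U × ℝ^m → ℝ be C². Assume there are constants a₀ > 0 and b₃ ≥ 0 such that L_vv(x,v)(w,w) ≥ a₀‖w‖² for all (x,v) ∈ U × ℝ^m and all w ∈ ℝ^m, and ‖L_xv(x,v)‖ ≤ b₃(1 + ‖v‖) for all (x,v) ∈ U × ℝ^m. Then for all x, y ∈ U and all v, w ∈ ℝ^m: a₀‖v − w‖² ≤ (L_v(x,v) − L_v(y,w))(v − w) + b₃(‖v‖ + ‖w‖ + 1)‖v − w‖‖x − y‖. -/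
set_option maxHeartbeats 1000000


open Set

/-- For a `C²` Lagrangian `L` on `U × ℝ^m` (`U ⊆ ℝ^m` open and convex)
with uniform convexity `L_vv(x,v)(w,w) ≥ a₀‖w‖²` and `‖L_xv(x,v)‖ ≤ b₃(1+‖v‖)`,
one has for all `x, y ∈ U` and all `v, w`:
`a₀‖v−w‖² ≤ (L_v(x,v) − L_v(y,w))(v−w) + b₃(‖v‖+‖w‖+1)‖v−w‖‖x−y‖`. -/
theorem stmt_2 {m : ℕ}
    (U : Set (EuclideanSpace ℝ (Fin m))) (hU : IsOpen U) (hUconv : Convex ℝ U)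
    (L : EuclideanSpace ℝ (Fin m) × EuclideanSpace ℝ (Fin m) → ℝ)
    (hL : ContDiffOn ℝ 2 L (U ×ˢ (univ : Set (EuclideanSpace ℝ (Fin m)))))
    (a₀ b₃ : ℝ) (ha₀ : 0 < a₀) (hb₃ : 0 ≤ b₃)
    (hLvv : ∀ x ∈ U, ∀ v w : EuclideanSpace ℝ (Fin m),
      a₀ * ‖w‖ ^ 2 ≤ fderiv ℝ (fun u => fderiv ℝ (fun w' => L (x, w')) u) v w w)
    (hLxv : ∀ x ∈ U, ∀ v : EuclideanSpace ℝ (Fin m),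
      ‖fderiv ℝ (fun y => fderiv ℝ (fun w' => L (y, w')) v) x‖ ≤ b₃ * (1 + ‖v‖)) :
    ∀ x ∈ U, ∀ y ∈ U, ∀ v w : EuclideanSpace ℝ (Fin m),
      a₀ * ‖v - w‖ ^ 2 ≤
        (fderiv ℝ (fun w' => L (x, w')) v - fderiv ℝ (fun w' => L (y, w')) w) (v - w)
          + b₃ * (‖v‖ + ‖w‖ + 1) * ‖v - w‖ * ‖x - y‖ := by
  intro x hx y hy v w
  have hO : IsOpen (U ×ˢ (univ : Set (EuclideanSpace ℝ (Fin m)))) := hU.prod isOpen_univ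
  -- Part A : convexity estimate in the velocity variable
  have hLx : ContDiff ℝ 2 (fun w' : EuclideanSpace ℝ (Fin m) => L (x, w')) := by
    rw [← contDiffOn_univ]
    exact hL.comp ((contDiff_const.prodMk contDiff_id).contDiffOn)
      (fun u _ => ⟨hx, trivial⟩)
  set F : EuclideanSpace ℝ (Fin m) → (EuclideanSpace ℝ (Fin m) →L[ℝ] ℝ) := fun u => fderiv ℝ (fun w' => L (x, w')) u with hF
  have hFdiff : Differentiable ℝ F := by
    exact (hLx.fderiv_right (m := 1) (by norm_num)).differentiable (by norm_num)
  set f₁ : EuclideanSpace ℝ (Fin m) → ℝ := fun u => F u (v - w) with hf₁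
  have hf₁d : ∀ u : EuclideanSpace ℝ (Fin m), HasFDerivAt f₁
      ((ContinuousLinearMap.apply ℝ ℝ (v - w)).comp (fderiv ℝ F u)) u := by
    intro u
    exact ((ContinuousLinearMap.apply ℝ ℝ (v - w)).hasFDerivAt).comp u (hFdiff u).hasFDerivAt
  have hf₁key : ∀ u : EuclideanSpace ℝ (Fin m), a₀ * ‖v - w‖ ^ 2 ≤ fderiv ℝ f₁ u (v - w) := by
    intro u
    have := (hf₁d u).fderiv
    rw [this]
    exact hLvv x hx u (v - w)
  -- mean value theorem along the segment from w to v
  have hA : a₀ * ‖v - w‖ ^ 2 ≤ f₁ v - f₁ w := by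
    set φ : ℝ → ℝ := fun t => f₁ (w + t • (v - w)) with hφdef
    have hφ : ∀ t : ℝ, HasDerivAt φ (fderiv ℝ f₁ (w + t • (v - w)) (v - w)) t := by
      intro t
      have hγ : HasDerivAt (fun t : ℝ => w + t • (v - w)) (v - w) t := by
        simpa using ((hasDerivAt_id t).smul_const (v - w)).const_add w
      exact ((hf₁d _).fderiv ▸ (hf₁d _)).comp_hasDerivAt t hγ |>.congr_deriv (by
        rw [(hf₁d _).fderiv])
    obtain ⟨c, _, hc⟩ := exists_hasDerivAt_eq_slope φ
      (fun t => fderiv ℝ f₁ (w + t • (v - w)) (v - w)) one_pos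
      (fun t _ => (hφ t).continuousAt.continuousWithinAt) (fun t _ => hφ t)
    have h10 : φ 1 - φ 0 = f₁ v - f₁ w := by
      simp [hφdef]
    have := hf₁key (w + c • (v - w))
    rw [hc] at this
    simpa [h10] using this
  -- Part B : Lipschitz estimate in the position variable
  set H : EuclideanSpace ℝ (Fin m) → (EuclideanSpace ℝ (Fin m) →L[ℝ] ℝ) := fun z => fderiv ℝ (fun w' => L (z, w')) w with hH
  have hkey : ∀ z ∈ U, H z
      = (fderiv ℝ L (z, w)).comp (ContinuousLinearMap.inr ℝ (EuclideanSpace ℝ (Fin m)) (EuclideanSpace ℝ (Fin m))) := by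
    intro z hz
    have hdL : DifferentiableAt ℝ L (z, w) :=
      (hL.differentiableOn (by norm_num)).differentiableAt (hO.mem_nhds ⟨hz, trivial⟩)
    have hmk : HasFDerivAt (fun w' : EuclideanSpace ℝ (Fin m) => (z, w')) (ContinuousLinearMap.inr ℝ (EuclideanSpace ℝ (Fin m)) (EuclideanSpace ℝ (Fin m))) w :=
      hasFDerivAt_prodMk_right z w
    have : (fun w' : EuclideanSpace ℝ (Fin m) => L (z, w')) = L ∘ (fun w' : EuclideanSpace ℝ (Fin m) => (z, w')) := rfl
    rw [hH]
    simp only [this]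
    rw [fderiv_comp w hdL hmk.differentiableAt, hmk.fderiv]
  have hdL2 : DifferentiableOn ℝ (fderiv ℝ L) (U ×ˢ (univ : Set (EuclideanSpace ℝ (Fin m)))) :=
    (hL.fderiv_of_isOpen (m := 1) hO (by norm_num)).differentiableOn (by norm_num)
  have hHdiff : ∀ ξ ∈ U, DifferentiableAt ℝ H ξ := by
    intro ξ hξ
    have hEq : H =ᶠ[nhds ξ]
        fun z => (fderiv ℝ L (z, w)).comp (ContinuousLinearMap.inr ℝ (EuclideanSpace ℝ (Fin m)) (EuclideanSpace ℝ (Fin m))) :=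
      Filter.eventually_of_mem (hU.mem_nhds hξ) (fun z hz => hkey z hz)
    have hrhs : DifferentiableAt ℝ
        (fun z => (fderiv ℝ L (z, w)).comp (ContinuousLinearMap.inr ℝ (EuclideanSpace ℝ (Fin m)) (EuclideanSpace ℝ (Fin m)))) ξ := by
      have h1 : DifferentiableAt ℝ (fun z : EuclideanSpace ℝ (Fin m) => fderiv ℝ L (z, w)) ξ := by
        have hz : DifferentiableAt ℝ (fun z : EuclideanSpace ℝ (Fin m) => (z, w)) ξ :=
          differentiableAt_id.prodMk (differentiableAt_const w)
        exact (hdL2.differentiableAt (hO.mem_nhds ⟨hξ, trivial⟩)).comp ξ hz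
      exact (((ContinuousLinearMap.compL ℝ (EuclideanSpace ℝ (Fin m)) (EuclideanSpace ℝ (Fin m) × EuclideanSpace ℝ (Fin m)) ℝ).flip
        (ContinuousLinearMap.inr ℝ (EuclideanSpace ℝ (Fin m)) (EuclideanSpace ℝ (Fin m)))).differentiableAt).comp ξ h1
    exact hrhs.congr_of_eventuallyEq hEq
  set G : EuclideanSpace ℝ (Fin m) → ℝ := fun z => H z (v - w) with hG
  have hGdiff : ∀ ξ ∈ U, DifferentiableAt ℝ G ξ := fun ξ hξ =>
    ((ContinuousLinearMap.apply ℝ ℝ (v - w)).differentiableAt).comp ξ (hHdiff ξ hξ)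
  have hGbound : ∀ ξ ∈ U, ‖fderiv ℝ G ξ‖ ≤ b₃ * (1 + ‖w‖) * ‖v - w‖ := by
    intro ξ hξ
    have hfd : fderiv ℝ G ξ
        = (ContinuousLinearMap.apply ℝ ℝ (v - w)).comp (fderiv ℝ H ξ) :=
      (((ContinuousLinearMap.apply ℝ ℝ (v - w)).hasFDerivAt).comp ξ
        (hHdiff ξ hξ).hasFDerivAt).fderiv
    rw [hfd]
    calc ‖(ContinuousLinearMap.apply ℝ ℝ (v - w)).comp (fderiv ℝ H ξ)‖
        ≤ ‖ContinuousLinearMap.apply ℝ ℝ (v - w)‖ * ‖fderiv ℝ H ξ‖ :=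
          ContinuousLinearMap.opNorm_comp_le _ _
      _ ≤ ‖v - w‖ * (b₃ * (1 + ‖w‖)) := by
          apply mul_le_mul ?_ (hLxv ξ hξ w) (by positivity) (norm_nonneg _)
          apply ContinuousLinearMap.opNorm_le_bound _ (norm_nonneg _)
          intro A
          rw [mul_comm]
          exact A.le_opNorm (v - w)
      _ = b₃ * (1 + ‖w‖) * ‖v - w‖ := by ring
  have hB : ‖G x - G y‖ ≤ b₃ * (1 + ‖w‖) * ‖v - w‖ * ‖x - y‖ :=
    hUconv.norm_image_sub_le_of_norm_fderiv_le hGdiff hGbound hy hx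
  -- assembly
  have hsplit : (fderiv ℝ (fun w' => L (x, w')) v - fderiv ℝ (fun w' => L (y, w')) w) (v - w)
      = (f₁ v - f₁ w) + (G x - G y) := by
    simp only [ContinuousLinearMap.sub_apply]
    have h1 : f₁ w = G x := rfl
    have h2 : f₁ v = fderiv ℝ (fun w' => L (x, w')) v (v - w) := rfl
    have h3 : G y = fderiv ℝ (fun w' => L (y, w')) w (v - w) := rfl
    rw [← h2, ← h3, h1]
    ring
  have hBlow : -(b₃ * (1 + ‖w‖) * ‖v - w‖ * ‖x - y‖) ≤ G x - G y := by
    have := abs_le.mp (by simpa [Real.norm_eq_abs] using hB)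
    linarith [this.1]
  have hmono : b₃ * (1 + ‖w‖) * ‖v - w‖ * ‖x - y‖
      ≤ b₃ * (‖v‖ + ‖w‖ + 1) * ‖v - w‖ * ‖x - y‖ := by
    have h1 : (1 + ‖w‖) ≤ (‖v‖ + ‖w‖ + 1) := by linarith [norm_nonneg v]
    have := mul_le_mul_of_nonneg_left h1 hb₃
    nlinarith [norm_nonneg (v - w), norm_nonneg (x - y),
      mul_nonneg (norm_nonneg (v - w)) (norm_nonneg (x - y))]
  rw [hsplit]
  linarith
end

section
/- Let B ≥ 1 and t₀ ≤ T be real numbers, and let z, g : [t₀,T] → ℝ be continuous nonnegative functions such that z(τ) ≤ g(τ) + g(t₀) + B·∫_{t₀}^{τ} z(t) dt for every τ ∈ [t₀,T]. Then for every τ ∈ [t₀,T]: z(τ) ≤ g(τ) + (1 + e^{B(τ−t₀)})·g(t₀) + B·e^{B(τ−t₀)}·(∫_{t₀}^{T} g(t)² dt)^{1/2}. -/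
set_option maxHeartbeats 1000000

open Set

lemma exp_aux_int (c t₀ τ : ℝ) (hc : 0 < c) :
    ∫ s in t₀..τ, Real.exp (-c * (s - t₀)) = (1 - Real.exp (-c * (τ - t₀))) / c := by
  have key : ∀ s ∈ uIcc t₀ τ,
      HasDerivAt (fun u => -(1/c) * Real.exp (-c * (u - t₀))) (Real.exp (-c * (s - t₀))) s := by
    intro s _
    have h1 : HasDerivAt (fun u : ℝ => -c * (u - t₀)) (-c) s := by
      simpa using ((hasDerivAt_id s).sub_const t₀).const_mul (-c)
    have h3 := h1.exp.const_mul (-(1/c))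
    refine h3.congr_deriv ?_
    field_simp
  rw [intervalIntegral.integral_eq_sub_of_hasDerivAt key
    ((Real.continuous_exp.comp (continuous_const.mul (continuous_id.sub continuous_const))).intervalIntegrable _ _)]
  have : (t₀ - t₀) = 0 := by ring
  rw [this]
  simp [Real.exp_zero]
  field_simp
  ring

lemma stmt_7_aux (B t₀ T : ℝ) (hB : 1 ≤ B) (hle : t₀ ≤ T)
    (z g : ℝ → ℝ)
    (hz : Continuous z) (hg : Continuous g)
    (hg0 : ∀ t ∈ Icc t₀ T, 0 ≤ g t)
    (hineq : ∀ τ ∈ Icc t₀ T, z τ ≤ g τ + g t₀ + B * ∫ t in t₀..τ, z t) :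
    ∀ τ ∈ Icc t₀ T,
      z τ ≤ g τ + (1 + Real.exp (B * (τ - t₀))) * g t₀
        + B * Real.exp (B * (τ - t₀)) * Real.sqrt (∫ t in t₀..T, (g t) ^ 2) := by
  have hB0 : (0:ℝ) < B := lt_of_lt_of_le one_pos hB
  set φ : ℝ → ℝ := fun x => ∫ t in t₀..x, z t with hφdef
  set a : ℝ → ℝ := fun s => Real.exp (-B * (s - t₀)) * (g s + g t₀) with hadef
  have ha_cont : Continuous a := by
    apply Continuous.mul
    · exact Real.continuous_exp.comp (continuous_const.mul (continuous_id.sub continuous_const))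
    · continuity
  set ψ : ℝ → ℝ := fun x => ∫ s in t₀..x, a s with hψdef
  set G : ℝ → ℝ := fun x => Real.exp (-B * (x - t₀)) * φ x - ψ x with hGdef
  have hφ : ∀ x, HasDerivAt φ (z x) x := fun x => (hz.integral_hasStrictDerivAt t₀ x).hasDerivAt
  have hψ : ∀ x, HasDerivAt ψ (a x) x := fun x => (ha_cont.integral_hasStrictDerivAt t₀ x).hasDerivAt
  have hE : ∀ x, HasDerivAt (fun y => Real.exp (-B * (y - t₀))) (-B * Real.exp (-B * (x - t₀))) x := by
    intro x
    have h1 : HasDerivAt (fun u : ℝ => -B * (u - t₀)) (-B) x := by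
      simpa using ((hasDerivAt_id x).sub_const t₀).const_mul (-B)
    simpa [mul_comm] using h1.exp
  have hG : ∀ x, HasDerivAt G
      (Real.exp (-B * (x - t₀)) * (z x - B * φ x - (g x + g t₀))) x := by
    intro x
    have := (((hE x).mul (hφ x)).sub (hψ x))
    refine this.congr_deriv ?_
    simp only [hadef]
    ring
  have hGanti : AntitoneOn G (Icc t₀ T) := by
    apply antitoneOn_of_deriv_nonpos (convex_Icc t₀ T)
    · have hGdiff : Differentiable ℝ G := fun x => (hG x).differentiableAt
      exact hGdiff.continuous.continuousOn
    · exact fun x _ => ((hG x).differentiableAt).differentiableWithinAt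
    · intro x hx
      rw [interior_Icc] at hx
      rw [(hG x).deriv]
      apply mul_nonpos_of_nonneg_of_nonpos (le_of_lt (Real.exp_pos _))
      have := hineq x ⟨le_of_lt hx.1, le_of_lt hx.2⟩
      simp only [hφdef]
      linarith
  have hGt₀ : G t₀ = 0 := by
    simp [hGdef, hφdef, hψdef, intervalIntegral.integral_same]
  -- main bound on φ
  intro τ hτ
  have hτ1 : t₀ ≤ τ := hτ.1
  have hτ2 : τ ≤ T := hτ.2
  have hφτ : φ τ ≤ Real.exp (B * (τ - t₀)) * ψ τ := by
    have h1 : G τ ≤ 0 := by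
      rw [← hGt₀]
      exact hGanti (left_mem_Icc.mpr hle) hτ hτ1
    have h2 : Real.exp (-B * (τ - t₀)) * φ τ ≤ ψ τ := by
      simp only [hGdef] at h1; linarith
    have h3 := mul_le_mul_of_nonneg_left h2 (le_of_lt (Real.exp_pos (B * (τ - t₀))))
    calc φ τ = Real.exp (B * (τ - t₀)) * (Real.exp (-B * (τ - t₀)) * φ τ) := by
          rw [← mul_assoc, ← Real.exp_add]
          ring_nf
          simp
      _ ≤ Real.exp (B * (τ - t₀)) * ψ τ := h3
  -- split ψ
  have hg0τ : 0 ≤ g t₀ := hg0 t₀ (left_mem_Icc.mpr hle)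
  have hIg : ∫ t in t₀..τ, (g t)^2 ≤ ∫ t in t₀..T, (g t)^2 := by
    apply intervalIntegral.integral_mono_interval le_rfl hτ1 hτ2
    · filter_upwards with x using sq_nonneg _
    · exact ((hg.pow 2).intervalIntegrable _ _)
  have hS0 : 0 ≤ ∫ t in t₀..T, (g t)^2 :=
    intervalIntegral.integral_nonneg hle (fun x _ => sq_nonneg _)
  set S : ℝ := Real.sqrt (∫ t in t₀..T, (g t)^2) with hSdef
  have hSsq : S^2 = ∫ t in t₀..T, (g t)^2 := Real.sq_sqrt hS0
  have hSnn : 0 ≤ S := Real.sqrt_nonneg _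
  -- for each ε > 0
  have key : ∀ ε > 0, z τ ≤ g τ + (1 + Real.exp (B * (τ - t₀))) * g t₀
      + B * Real.exp (B * (τ - t₀)) * S + B * Real.exp (B * (τ - t₀)) * ε := by
    intro ε hε
    set L : ℝ := S + ε with hLdef
    have hL : 0 < L := by positivity
    -- ψ τ = I₂ + g t₀ * I₁
    have hsplit : ψ τ = (∫ s in t₀..τ, Real.exp (-B * (s - t₀)) * g s)
        + g t₀ * ∫ s in t₀..τ, Real.exp (-B * (s - t₀)) := by
      simp only [hψdef, hadef]
      rw [← intervalIntegral.integral_const_mul, ← intervalIntegral.integral_add]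
      · congr 1; ext s; ring
      · exact ((Real.continuous_exp.comp (continuous_const.mul (continuous_id.sub continuous_const))).mul hg).intervalIntegrable _ _
      · exact (continuous_const.mul (Real.continuous_exp.comp (continuous_const.mul (continuous_id.sub continuous_const)))).intervalIntegrable _ _
    have hI1 : B * (∫ s in t₀..τ, Real.exp (-B * (s - t₀))) ≤ 1 := by
      rw [exp_aux_int B t₀ τ hB0]
      rw [mul_div_cancel₀ _ (ne_of_gt hB0)]
      have := Real.exp_pos (-B * (τ - t₀))
      linarith
    have hI2 : (∫ s in t₀..τ, Real.exp (-B * (s - t₀)) * g s) ≤ L / (4*B) + L / 2 := by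
      have hpt : ∀ s ∈ Icc t₀ τ, Real.exp (-B * (s - t₀)) * g s ≤
          L/2 * Real.exp (-(2*B) * (s - t₀)) + (g s)^2 / (2*L) := by
        intro s _
        have ha2 : Real.exp (-(2*B) * (s - t₀)) = (Real.exp (-B * (s - t₀)))^2 := by
          rw [sq, ← Real.exp_add]; ring_nf
        rw [ha2]
        set e := Real.exp (-B * (s - t₀)) with hedef
        have key2 : 2*L*(e*(g s)) ≤ L^2*e^2 + (g s)^2 := by nlinarith [sq_nonneg (L*e - g s)]
        calc e * g s = (2*L*(e*(g s)))/(2*L) := by field_simp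
          _ ≤ (L^2*e^2 + (g s)^2)/(2*L) := by gcongr
          _ = L/2*e^2 + (g s)^2/(2*L) := by field_simp
      have hmono := intervalIntegral.integral_mono_on (μ := MeasureTheory.volume) hτ1
        (((Real.continuous_exp.comp (continuous_const.mul (continuous_id.sub continuous_const))).mul hg).intervalIntegrable t₀ τ)
        (((continuous_const.mul (Real.continuous_exp.comp (continuous_const.mul (continuous_id.sub continuous_const)))).add ((hg.pow 2).div_const (2*L))).intervalIntegrable t₀ τ) hpt
      have hsum : (∫ s in t₀..τ, (L/2 * Real.exp (-(2*B) * (s - t₀)) + (g s)^2 / (2*L)))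
          = L/2 * (∫ s in t₀..τ, Real.exp (-(2*B) * (s - t₀)))
            + (1/(2*L)) * ∫ s in t₀..τ, (g s)^2 := by
        rw [← intervalIntegral.integral_const_mul, ← intervalIntegral.integral_const_mul,
          ← intervalIntegral.integral_add]
        · congr 1; ext s; ring
        · exact (continuous_const.mul (Real.continuous_exp.comp (continuous_const.mul (continuous_id.sub continuous_const)))).intervalIntegrable _ _
        · exact (continuous_const.mul (hg.pow 2)).intervalIntegrable _ _
      have hJ : (∫ s in t₀..τ, Real.exp (-(2*B) * (s - t₀))) ≤ 1/(2*B) := by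
        rw [exp_aux_int (2*B) t₀ τ (by linarith)]
        have := Real.exp_pos (-(2*B) * (τ - t₀))
        rw [div_le_div_iff₀ (by linarith) (by linarith)]
        nlinarith
      have hIg2 : (∫ s in t₀..τ, (g s)^2) ≤ L^2 := by
        calc (∫ s in t₀..τ, (g s)^2) ≤ ∫ t in t₀..T, (g t)^2 := hIg
          _ = S^2 := hSsq.symm
          _ ≤ L^2 := by nlinarith
      calc (∫ s in t₀..τ, Real.exp (-B * (s - t₀)) * g s)
          ≤ L/2 * (∫ s in t₀..τ, Real.exp (-(2*B) * (s - t₀)))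
            + (1/(2*L)) * ∫ s in t₀..τ, (g s)^2 := by rw [← hsum]; exact hmono
        _ ≤ L/2 * (1/(2*B)) + (1/(2*L)) * L^2 := by
            apply add_le_add
            · exact mul_le_mul_of_nonneg_left hJ (by positivity)
            · exact mul_le_mul_of_nonneg_left hIg2 (by positivity)
        _ = L / (4*B) + L / 2 := by field_simp; ring
    -- assemble
    have hz_bound := hineq τ hτ
    have hexp : 0 < Real.exp (B * (τ - t₀)) := Real.exp_pos _
    have hψbound : B * Real.exp (B * (τ - t₀)) * ψ τ ≤
        Real.exp (B * (τ - t₀)) * g t₀ + B * Real.exp (B * (τ - t₀)) * L := by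
      rw [hsplit]
      have h1 : B * (g t₀ * ∫ s in t₀..τ, Real.exp (-B * (s - t₀))) ≤ g t₀ := by
        have := mul_le_mul_of_nonneg_left hI1 hg0τ
        nlinarith
      have h2 : B * (∫ s in t₀..τ, Real.exp (-B * (s - t₀)) * g s) ≤ B * (L / (4*B) + L / 2) :=
        mul_le_mul_of_nonneg_left hI2 (le_of_lt hB0)
      have h3 : B * (L / (4*B) + L / 2) ≤ B * L := by
        rw [mul_add]
        have : B * (L / (4*B)) = L / 4 := by field_simp
        rw [this]
        nlinarith
      have h4 := le_trans h2 h3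
      have hexp' := le_of_lt hexp
      have h5 := mul_le_mul_of_nonneg_left h4 hexp'
      have h6 := mul_le_mul_of_nonneg_left h1 hexp'
      nlinarith [h5, h6]
    have hBφ : B * φ τ ≤ B * (Real.exp (B * (τ - t₀)) * ψ τ) :=
      mul_le_mul_of_nonneg_left hφτ (le_of_lt hB0)
    rw [show (∫ t in t₀..τ, z t) = φ τ from rfl] at hz_bound
    have : B * Real.exp (B * (τ - t₀)) * ψ τ = B * (Real.exp (B * (τ - t₀)) * ψ τ) := by ring
    rw [this] at hψbound
    simp only [hLdef] at hψbound
    nlinarith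
  -- conclude
  apply le_of_forall_pos_le_add
  intro ε hε
  have hexp : 0 < B * Real.exp (B * (τ - t₀)) := by positivity
  have := key (ε / (B * Real.exp (B * (τ - t₀)))) (by positivity)
  rw [mul_div_cancel₀ _ (ne_of_gt hexp)] at this
  linarith

/-- Grönwall-type inequality with an `L²` forcing term: if
`z(τ) ≤ g(τ) + g(t₀) + B∫_{t₀}^{τ} z` on `[t₀,T]` with `z, g ≥ 0` continuous and
`B ≥ 1`, then `z(τ) ≤ g(τ) + (1 + e^{B(τ−t₀)})g(t₀) + B e^{B(τ−t₀)} ‖g‖_{L²([t₀,T])}`. -/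
theorem stmt_7 (B t₀ T : ℝ) (hB : 1 ≤ B) (hle : t₀ ≤ T)
    (z g : ℝ → ℝ)
    (hz : ContinuousOn z (Icc t₀ T)) (hg : ContinuousOn g (Icc t₀ T))
    (hz0 : ∀ t ∈ Icc t₀ T, 0 ≤ z t) (hg0 : ∀ t ∈ Icc t₀ T, 0 ≤ g t)
    (hineq : ∀ τ ∈ Icc t₀ T, z τ ≤ g τ + g t₀ + B * ∫ t in t₀..τ, z t) :
    ∀ τ ∈ Icc t₀ T,
      z τ ≤ g τ + (1 + Real.exp (B * (τ - t₀))) * g t₀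
        + B * Real.exp (B * (τ - t₀)) * Real.sqrt (∫ t in t₀..T, (g t) ^ 2) := by
  set z' : ℝ → ℝ := IccExtend hle ((Icc t₀ T).restrict z) with hz'def
  set g' : ℝ → ℝ := IccExtend hle ((Icc t₀ T).restrict g) with hg'def
  have hz'c : Continuous z' := Continuous.Icc_extend' (continuousOn_iff_continuous_restrict.mp hz)
  have hg'c : Continuous g' := Continuous.Icc_extend' (continuousOn_iff_continuous_restrict.mp hg)
  have hz'eq : ∀ t ∈ Icc t₀ T, z' t = z t := fun t ht => IccExtend_of_mem hle _ ht
  have hg'eq : ∀ t ∈ Icc t₀ T, g' t = g t := fun t ht => IccExtend_of_mem hle _ ht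
  have ht₀mem : t₀ ∈ Icc t₀ T := left_mem_Icc.mpr hle
  have hint_eq : ∀ τ ∈ Icc t₀ T, (∫ t in t₀..τ, z' t) = ∫ t in t₀..τ, z t := by
    intro τ hτ
    apply intervalIntegral.integral_congr
    intro x hx
    rw [uIcc_of_le hτ.1] at hx
    exact hz'eq x ⟨hx.1, hx.2.trans hτ.2⟩
  have hint_eq2 : (∫ t in t₀..T, (g' t)^2) = ∫ t in t₀..T, (g t)^2 := by
    apply intervalIntegral.integral_congr
    intro x hx
    rw [uIcc_of_le hle] at hx
    show g' x ^ 2 = g x ^ 2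
    rw [hg'eq x hx]
  have hg'0 : ∀ t ∈ Icc t₀ T, 0 ≤ g' t := fun t ht => (hg'eq t ht) ▸ hg0 t ht
  have hineq' : ∀ τ ∈ Icc t₀ T, z' τ ≤ g' τ + g' t₀ + B * ∫ t in t₀..τ, z' t := by
    intro τ hτ
    rw [hz'eq τ hτ, hg'eq τ hτ, hg'eq t₀ ht₀mem, hint_eq τ hτ]
    exact hineq τ hτ
  intro τ hτ
  have := stmt_7_aux B t₀ T hB hle z' g' hz'c hg'c hg'0 hineq' τ hτ
  rw [hz'eq τ hτ, hg'eq τ hτ, hg'eq t₀ ht₀mem, hint_eq2] at this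
  exact this
end

section
/- Let U ⊆ ℝ^m be open, let a, b > 0, d₁ ∈ ℝ, and k > d₁. Let L : U × ℝ^m → ℝ, let θ : U → (ℝ^m)^* be continuous and ψ : U → ℝ be continuous, and assume: L(x,v) ≥ (a/2)‖v‖² + θ(x)(v) + ψ(x) for all (x,v) ∈ U × ℝ^m; ψ(x) ≥ −d₁ for all x ∈ U; and |∮_γ θ| ≤ b·ℓ(γ)² for every closed absolutely continuous curve γ in U. Then every closed absolutely continuous curve γ : [0,T] → U (T > 0, γ(T) = γ(0)) with square-integrable derivative, with t ↦ L(γ(t),γ̇(t)) integrable and with negative action A_{L+k}(γ) < 0 satisfies T > a/(2b) and ℓ(γ)² > a(k−d₁)/(2b²). -/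
open Set MeasureTheory

set_option maxHeartbeats 1000000

/-- In a chart, for a Lagrangian bounded below by
`(a/2)‖v‖² + θ_x(v) + ψ(x)` with `ψ ≥ −d₁` and circulation bound `|∮_γ θ| ≤ b ℓ(γ)²`,
every closed absolutely continuous curve with negative `(L+k)`-action (`k > d₁`)
satisfies `T > a/(2b)` and `ℓ(γ)² > a(k−d₁)/(2b²)`. -/
theorem stmt_9 {m : ℕ}
    (U : Set (EuclideanSpace ℝ (Fin m))) (hU : IsOpen U)
    (a b d₁ k : ℝ) (ha : 0 < a) (hb : 0 < b) (hk : d₁ < k)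
    (L : EuclideanSpace ℝ (Fin m) × EuclideanSpace ℝ (Fin m) → ℝ)
    (θ : EuclideanSpace ℝ (Fin m) → (EuclideanSpace ℝ (Fin m) →L[ℝ] ℝ))
    (hθcont : ContinuousOn θ U)
    (ψ : EuclideanSpace ℝ (Fin m) → ℝ) (hψcont : ContinuousOn ψ U)
    (hL : ∀ x ∈ U, ∀ v : EuclideanSpace ℝ (Fin m),
      a / 2 * ‖v‖ ^ 2 + θ x v + ψ x ≤ L (x, v))
    (hψ : ∀ x ∈ U, -d₁ ≤ ψ x)
    (hcirc : ∀ S : ℝ, 0 < S → ∀ γ γ' : ℝ → EuclideanSpace ℝ (Fin m),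
      (∀ t ∈ Icc (0:ℝ) S, γ t ∈ U) →
      (∀ t ∈ Icc (0:ℝ) S, γ t = γ 0 + ∫ s in (0:ℝ)..t, γ' s) →
      IntegrableOn γ' (Icc (0:ℝ) S) → γ S = γ 0 →
      |∫ t in (0:ℝ)..S, θ (γ t) (γ' t)| ≤ b * (∫ t in (0:ℝ)..S, ‖γ' t‖) ^ 2)
    (T : ℝ) (hT : 0 < T) (γ γ' : ℝ → EuclideanSpace ℝ (Fin m))
    (hγU : ∀ t ∈ Icc (0:ℝ) T, γ t ∈ U)
    (hγac : ∀ t ∈ Icc (0:ℝ) T, γ t = γ 0 + ∫ s in (0:ℝ)..t, γ' s)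
    (hγ'int : IntegrableOn γ' (Icc (0:ℝ) T))
    (hγ'L2 : IntegrableOn (fun t => ‖γ' t‖ ^ 2) (Icc (0:ℝ) T))
    (hLint : IntegrableOn (fun t => L (γ t, γ' t)) (Icc (0:ℝ) T))
    (hclosed : γ T = γ 0)
    (hneg : (∫ t in (0:ℝ)..T, (L (γ t, γ' t) + k)) < 0) :
    a / (2 * b) < T ∧
      a * (k - d₁) / (2 * b ^ 2) < (∫ t in (0:ℝ)..T, ‖γ' t‖) ^ 2 := by
  set ℓ : ℝ := ∫ t in (0:ℝ)..T, ‖γ' t‖ with hℓdef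
  set I₂ : ℝ := ∫ t in (0:ℝ)..T, ‖γ' t‖ ^ 2 with hI₂def
  set C : ℝ := ∫ t in (0:ℝ)..T, θ (γ t) (γ' t) with hCdef
  have hIccT : uIcc (0:ℝ) T = Icc 0 T := uIcc_of_le hT.le
  -- continuity of γ on [0,T]
  have hγcont : ContinuousOn γ (Icc 0 T) := by
    have h1 : ContinuousOn (fun t => γ 0 + ∫ s in (0:ℝ)..t, γ' s) (Icc 0 T) :=
      continuousOn_const.add (by
        have := intervalIntegral.continuousOn_primitive_interval
          (by rwa [hIccT] : IntegrableOn γ' (uIcc (0:ℝ) T))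
        rwa [hIccT] at this)
    exact h1.congr fun t ht => hγac t ht
  have hθγcont : ContinuousOn (fun t => θ (γ t)) (Icc 0 T) :=
    hθcont.comp hγcont hγU
  have hψγcont : ContinuousOn (fun t => ψ (γ t)) (Icc 0 T) :=
    hψcont.comp hγcont hγU
  -- bound on θ ∘ γ
  obtain ⟨M, hM⟩ := isCompact_Icc.exists_bound_of_continuousOn hθγcont
  -- integrability of t ↦ θ (γ t) (γ' t)
  have hθint : IntegrableOn (fun t => θ (γ t) (γ' t)) (Icc 0 T) := by
    have hmeas : AEStronglyMeasurable (fun t => θ (γ t) (γ' t))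
        (volume.restrict (Icc (0:ℝ) T)) := by
      have h1 : AEStronglyMeasurable (fun t => θ (γ t))
          (volume.restrict (Icc (0:ℝ) T)) :=
        hθγcont.aestronglyMeasurable measurableSet_Icc
      exact (ContinuousLinearMap.apply ℝ ℝ :
        EuclideanSpace ℝ (Fin m) →L[ℝ] (EuclideanSpace ℝ (Fin m) →L[ℝ] ℝ) →L[ℝ] ℝ).flip.aestronglyMeasurable_comp₂ h1 hγ'int.1
    refine Integrable.mono' (hγ'int.norm.const_mul M) hmeas ?_
    filter_upwards [ae_restrict_mem measurableSet_Icc] with t ht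
    calc ‖θ (γ t) (γ' t)‖ ≤ ‖θ (γ t)‖ * ‖γ' t‖ := (θ (γ t)).le_opNorm _
      _ ≤ M * ‖γ' t‖ := mul_le_mul_of_nonneg_right (hM t ht) (norm_nonneg _)
  have hψint : IntegrableOn (fun t => ψ (γ t)) (Icc 0 T) :=
    hψγcont.integrableOn_compact isCompact_Icc
  have hnormint : IntegrableOn (fun t => ‖γ' t‖) (Icc 0 T) := hγ'int.norm
  -- interval integrability
  have ii : ∀ f : ℝ → ℝ, IntegrableOn f (Icc 0 T) → IntervalIntegrable f volume 0 T := by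
    intro f hf
    rw [← hIccT] at hf
    exact hf.intervalIntegrable
  have iiθ := ii _ hθint
  have iiψ := ii _ hψint
  have iiL2 := ii _ hγ'L2
  have iinorm := ii _ hnormint
  have iiL := ii _ hLint
  -- lower bound on the action
  have hlow : a / 2 * I₂ + C + (-d₁ * T) + k * T ≤ ∫ t in (0:ℝ)..T, (L (γ t, γ' t) + k) := by
    have hΨ : -d₁ * T ≤ ∫ t in (0:ℝ)..T, ψ (γ t) := by
      have := intervalIntegral.integral_mono_on hT.le
        (intervalIntegrable_const (c := -d₁)) iiψ (fun t ht => hψ _ (hγU t ht))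
      simpa [mul_comm] using this
    have h1 : ∫ t in (0:ℝ)..T, (a / 2 * ‖γ' t‖ ^ 2 + θ (γ t) (γ' t) + ψ (γ t) + k)
        ≤ ∫ t in (0:ℝ)..T, (L (γ t, γ' t) + k) := by
      refine intervalIntegral.integral_mono_on hT.le ?_ (iiL.add intervalIntegrable_const)
        (fun t ht => by have := hL _ (hγU t ht) (γ' t); linarith)
      exact (((iiL2.const_mul (a/2)).add iiθ).add iiψ).add intervalIntegrable_const
    have h2 : ∫ t in (0:ℝ)..T, (a / 2 * ‖γ' t‖ ^ 2 + θ (γ t) (γ' t) + ψ (γ t) + k)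
        = a / 2 * I₂ + C + (∫ t in (0:ℝ)..T, ψ (γ t)) + k * T := by
      rw [intervalIntegral.integral_add (((iiL2.const_mul (a/2)).add iiθ).add iiψ)
            intervalIntegrable_const,
          intervalIntegral.integral_add ((iiL2.const_mul (a/2)).add iiθ) iiψ,
          intervalIntegral.integral_add (iiL2.const_mul (a/2)) iiθ,
          intervalIntegral.integral_const_mul, intervalIntegral.integral_const,
          hI₂def, hCdef]
      simp only [smul_eq_mul, sub_zero]
      ring
    linarith [h1, h2, hΨ]
  -- circulation bound
  have hC : |C| ≤ b * ℓ ^ 2 := hcirc T hT γ γ' hγU hγac hγ'int hclosed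
  have hCge : -(b * ℓ ^ 2) ≤ C := neg_le_of_abs_le hC
  -- basic positivity
  have hℓ0 : 0 ≤ ℓ := intervalIntegral.integral_nonneg hT.le (fun t _ => norm_nonneg _)
  have hI₂0 : 0 ≤ I₂ := intervalIntegral.integral_nonneg hT.le (fun t _ => sq_nonneg _)
  -- main inequality
  have hmain : a / 2 * I₂ - b * ℓ ^ 2 + (k - d₁) * T < 0 := by
    have := hneg
    nlinarith [hlow, hCge, this]
  have hkT : 0 < (k - d₁) * T := mul_pos (sub_pos.2 hk) hT
  have hℓpos : 0 < ℓ := by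
    rcases hℓ0.lt_or_eq with h | h
    · exact h
    · exfalso
      rw [← h] at hmain
      nlinarith [hmain, hI₂0, hkT]
  -- Cauchy–Schwarz via pointwise inequality
  have hCS : ∀ ε : ℝ, 0 < ε → ℓ ≤ ε / 2 * I₂ + T / (2 * ε) := by
    intro ε hε
    have h1 : ∫ t in (0:ℝ)..T, ‖γ' t‖
        ≤ ∫ t in (0:ℝ)..T, (ε / 2 * ‖γ' t‖ ^ 2 + 1 / (2 * ε)) := by
      refine intervalIntegral.integral_mono_on hT.le iinorm
        ((iiL2.const_mul (ε/2)).add intervalIntegrable_const)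
        (fun t ht => ?_)
      have h : 0 ≤ (ε * ‖γ' t‖ - 1) ^ 2 / (2 * ε) := by positivity
      have hne : ε ≠ 0 := ne_of_gt hε
      have hexp : (ε * ‖γ' t‖ - 1) ^ 2 / (2 * ε)
          = ε / 2 * ‖γ' t‖ ^ 2 + 1 / (2 * ε) - ‖γ' t‖ := by
        field_simp
        ring
      linarith [hexp ▸ h]
    have h2 : ∫ t in (0:ℝ)..T, (ε / 2 * ‖γ' t‖ ^ 2 + 1 / (2 * ε))
        = ε / 2 * I₂ + T / (2 * ε) := by
      rw [intervalIntegral.integral_add (iiL2.const_mul (ε/2)) intervalIntegrable_const,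
          intervalIntegral.integral_const_mul, intervalIntegral.integral_const, hI₂def]
      simp only [smul_eq_mul, sub_zero]
      ring
    rw [h2] at h1
    rw [hℓdef]
    exact h1
  have hI₂pos : 0 < I₂ := by
    rcases hI₂0.lt_or_eq with h | h
    · exact h
    · exfalso
      have h2 := hCS (T / ℓ) (by positivity)
      rw [← h] at h2
      have h3 : T / (2 * (T / ℓ)) = ℓ / 2 := by
        field_simp
      rw [h3] at h2
      nlinarith [h2, hℓpos]
  have hCSfinal : ℓ ^ 2 ≤ T * I₂ := by
    have h0 := hCS (ℓ / I₂) (by positivity)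
    have h1 : ℓ / I₂ / 2 * I₂ = ℓ / 2 := by
      field_simp
    have h2 : T / (2 * (ℓ / I₂)) = T * I₂ / (2 * ℓ) := by
      rw [div_eq_div_iff (by positivity) (by positivity)]
      field_simp
    rw [h1, h2] at h0
    have h3 : ℓ / 2 ≤ T * I₂ / (2 * ℓ) := by linarith
    rw [div_le_div_iff₀ (by norm_num) (by positivity)] at h3
    nlinarith [h3]
  have haT : a < 2 * b * T := by
    nlinarith [hmain, mul_le_mul_of_nonneg_left hCSfinal hb.le, hkT, hI₂pos]
  constructor
  · rw [div_lt_iff₀ (by positivity)]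
    linarith
  · rw [div_lt_iff₀ (by positivity)]
    have h1 : (k - d₁) * T ≤ b * ℓ ^ 2 := by nlinarith [hmain, hI₂0]
    have h2 : 0 < 2 * b * T - a := by linarith
    nlinarith [mul_pos (sub_pos.2 hk) h2, h1]
end

section
/- Let U ⊆ ℝ^m be open, let a, b > 0, d₁ ∈ ℝ, and k > d₁. Let L : U × ℝ^m → ℝ, let θ : U → (ℝ^m)^* be continuous and ψ : U → ℝ be continuous, and assume: L(x,v) ≥ (a/2)‖v‖² + θ(x)(v) + ψ(x) for all (x,v) ∈ U × ℝ^m; ψ(x) ≥ −d₁ for all x ∈ U; and |∮_γ θ| ≤ b·ℓ(γ)² for every closed absolutely continuous curve γ in U. Then every closed absolutely continuous curve γ : [0,T] → U (T > 0, γ(T) = γ(0)) with square-integrable derivative and with t ↦ L(γ(t),γ̇(t)) integrable satisfies A_{L+k}(γ) ≥ ℓ(γ)·√(2a(k−d₁)) − b·ℓ(γ)². -/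
open Set MeasureTheory

/-- In a chart, for a Lagrangian bounded below by
`(a/2)‖v‖² + θ_x(v) + ψ(x)` with `ψ ≥ −d₁` and circulation bound `|∮_γ θ| ≤ b ℓ(γ)²`,
every closed absolutely continuous curve satisfies
`A_{L+k}(γ) ≥ ℓ(γ)·√(2a(k−d₁)) − b·ℓ(γ)²` whenever `k > d₁`. -/
theorem stmt_10 {m : ℕ}
    (U : Set (EuclideanSpace ℝ (Fin m))) (hU : IsOpen U)
    (a b d₁ k : ℝ) (ha : 0 < a) (hb : 0 < b) (hk : d₁ < k)
    (L : EuclideanSpace ℝ (Fin m) × EuclideanSpace ℝ (Fin m) → ℝ)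
    (θ : EuclideanSpace ℝ (Fin m) → (EuclideanSpace ℝ (Fin m) →L[ℝ] ℝ))
    (hθcont : ContinuousOn θ U)
    (ψ : EuclideanSpace ℝ (Fin m) → ℝ) (hψcont : ContinuousOn ψ U)
    (hL : ∀ x ∈ U, ∀ v : EuclideanSpace ℝ (Fin m),
      a / 2 * ‖v‖ ^ 2 + θ x v + ψ x ≤ L (x, v))
    (hψ : ∀ x ∈ U, -d₁ ≤ ψ x)
    (hcirc : ∀ S : ℝ, 0 < S → ∀ γ γ' : ℝ → EuclideanSpace ℝ (Fin m),
      (∀ t ∈ Icc (0:ℝ) S, γ t ∈ U) →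
      (∀ t ∈ Icc (0:ℝ) S, γ t = γ 0 + ∫ s in (0:ℝ)..t, γ' s) →
      IntegrableOn γ' (Icc (0:ℝ) S) → γ S = γ 0 →
      |∫ t in (0:ℝ)..S, θ (γ t) (γ' t)| ≤ b * (∫ t in (0:ℝ)..S, ‖γ' t‖) ^ 2)
    (T : ℝ) (hT : 0 < T) (γ γ' : ℝ → EuclideanSpace ℝ (Fin m))
    (hγU : ∀ t ∈ Icc (0:ℝ) T, γ t ∈ U)
    (hγac : ∀ t ∈ Icc (0:ℝ) T, γ t = γ 0 + ∫ s in (0:ℝ)..t, γ' s)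
    (hγ'int : IntegrableOn γ' (Icc (0:ℝ) T))
    (hγ'L2 : IntegrableOn (fun t => ‖γ' t‖ ^ 2) (Icc (0:ℝ) T))
    (hLint : IntegrableOn (fun t => L (γ t, γ' t)) (Icc (0:ℝ) T))
    (hclosed : γ T = γ 0) :
    (∫ t in (0:ℝ)..T, ‖γ' t‖) * Real.sqrt (2 * a * (k - d₁))
        - b * (∫ t in (0:ℝ)..T, ‖γ' t‖) ^ 2
      ≤ ∫ t in (0:ℝ)..T, (L (γ t, γ' t) + k) := by
  set s : ℝ := Real.sqrt (2 * a * (k - d₁)) with hs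
  set ℓ : ℝ := ∫ t in (0:ℝ)..T, ‖γ' t‖ with hℓ
  have huIcc : uIcc (0:ℝ) T = Icc (0:ℝ) T := uIcc_of_le hT.le
  -- continuity of γ on [0,T]
  have hγcont : ContinuousOn γ (Icc (0:ℝ) T) := by
    have h1 : ContinuousOn (fun t => γ 0 + ∫ u in (0:ℝ)..t, γ' u) (Icc (0:ℝ) T) := by
      apply continuousOn_const.add
      have := intervalIntegral.continuousOn_primitive_interval
        (a := (0:ℝ)) (b := T) (f := γ') (μ := volume) (by rwa [huIcc])
      rwa [huIcc] at this
    exact h1.congr hγac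
  have hmaps : MapsTo γ (Icc (0:ℝ) T) U := fun t ht => hγU t ht
  -- bound for θ along γ
  obtain ⟨M, hM⟩ := isCompact_Icc.exists_bound_of_continuousOn (hθcont.comp hγcont hmaps)
  have hM0 : 0 ≤ M := le_trans (norm_nonneg _) (hM 0 ⟨le_rfl, hT.le⟩)
  -- integrability of θ (γ t) (γ' t)
  have hθγmeas : AEStronglyMeasurable (fun t => θ (γ t) (γ' t))
      (volume.restrict (Icc (0:ℝ) T)) := by
    have h1 : AEStronglyMeasurable (fun t => (θ (γ t), γ' t))
        (volume.restrict (Icc (0:ℝ) T)) :=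
      ((hθcont.comp hγcont hmaps).aestronglyMeasurable measurableSet_Icc).prodMk
        hγ'int.aestronglyMeasurable
    exact (isBoundedBilinearMap_apply.continuous).comp_aestronglyMeasurable h1
  have hθγint : IntegrableOn (fun t => θ (γ t) (γ' t)) (Icc (0:ℝ) T) := by
    refine Integrable.mono' ((hγ'int.norm).const_mul M) hθγmeas ?_
    filter_upwards [ae_restrict_mem measurableSet_Icc] with t ht
    calc ‖θ (γ t) (γ' t)‖ ≤ ‖θ (γ t)‖ * ‖γ' t‖ := (θ (γ t)).le_opNorm _
      _ ≤ M * ‖γ' t‖ := mul_le_mul_of_nonneg_right (hM t ht) (norm_nonneg _)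
  have hψγint : IntegrableOn (fun t => ψ (γ t)) (Icc (0:ℝ) T) :=
    (hψcont.comp hγcont hmaps).integrableOn_compact isCompact_Icc
  have hq : IntegrableOn (fun t => a / 2 * ‖γ' t‖ ^ 2) (Icc (0:ℝ) T) :=
    hγ'L2.const_mul (a / 2)
  have hIcc_to_ii : ∀ f : ℝ → ℝ, IntegrableOn f (Icc (0:ℝ) T) →
      IntervalIntegrable f volume 0 T := by
    intro f hf
    rw [intervalIntegrable_iff_integrableOn_Ioc_of_le hT.le]
    exact hf.mono_set Ioc_subset_Icc_self
  have hnormint : IntervalIntegrable (fun t => ‖γ' t‖) volume 0 T :=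
    hIcc_to_ii _ hγ'int.norm
  -- step 1 : ∫ (L+k) ≥ ∫ (a/2‖γ'‖² + θγ' + ψ∘γ + k)
  have step1 : (∫ t in (0:ℝ)..T, (a / 2 * ‖γ' t‖ ^ 2 + θ (γ t) (γ' t) + ψ (γ t) + k))
      ≤ ∫ t in (0:ℝ)..T, (L (γ t, γ' t) + k) := by
    apply intervalIntegral.integral_mono_on hT.le
    · exact hIcc_to_ii _ (((hq.add hθγint).add hψγint).add
        (integrableOn_const measure_Icc_lt_top.ne))
    · exact hIcc_to_ii _ (hLint.add (integrableOn_const measure_Icc_lt_top.ne))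
    · intro t ht
      have := hL (γ t) (hγU t ht) (γ' t)
      linarith
  -- split the integral
  have hsplit : (∫ t in (0:ℝ)..T, (a / 2 * ‖γ' t‖ ^ 2 + θ (γ t) (γ' t) + ψ (γ t) + k))
      = (∫ t in (0:ℝ)..T, (a / 2 * ‖γ' t‖ ^ 2 + ψ (γ t) + k))
        + ∫ t in (0:ℝ)..T, θ (γ t) (γ' t) := by
    have hA : (∫ t in (0:ℝ)..T, ((fun u => a / 2 * ‖γ' u‖ ^ 2 + ψ (γ u) + k) t
          + (fun u => θ (γ u) (γ' u)) t))
        = (∫ t in (0:ℝ)..T, (a / 2 * ‖γ' t‖ ^ 2 + ψ (γ t) + k))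
          + ∫ t in (0:ℝ)..T, θ (γ t) (γ' t) :=
      intervalIntegral.integral_add (hIcc_to_ii _ ((hq.add hψγint).add
        (integrableOn_const measure_Icc_lt_top.ne))) (hIcc_to_ii _ hθγint)
    rw [← hA]
    apply intervalIntegral.integral_congr
    intro t _
    simp only []
    ring
  -- circulation bound
  have hcircT : -(b * ℓ ^ 2) ≤ ∫ t in (0:ℝ)..T, θ (γ t) (γ' t) := by
    have := hcirc T hT γ γ' hγU hγac hγ'int hclosed
    rw [← hℓ] at this
    exact neg_le_of_abs_le this
  -- pointwise AM-GM bound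
  have hs2 : s ^ 2 = 2 * a * (k - d₁) := by
    rw [hs, Real.sq_sqrt]
    nlinarith
  have hs0 : 0 ≤ s := Real.sqrt_nonneg _
  have step2 : s * ℓ ≤ ∫ t in (0:ℝ)..T, (a / 2 * ‖γ' t‖ ^ 2 + ψ (γ t) + k) := by
    have : (∫ t in (0:ℝ)..T, s * ‖γ' t‖)
        ≤ ∫ t in (0:ℝ)..T, (a / 2 * ‖γ' t‖ ^ 2 + ψ (γ t) + k) := by
      apply intervalIntegral.integral_mono_on hT.le (hnormint.const_mul s)
      · exact hIcc_to_ii _ ((hq.add hψγint).add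
          (integrableOn_const measure_Icc_lt_top.ne))
      · intro t ht
        have h1 : -d₁ ≤ ψ (γ t) := hψ (γ t) (hγU t ht)
        have h2 : 0 ≤ ‖γ' t‖ := norm_nonneg _
        nlinarith [sq_nonneg (a * ‖γ' t‖ - s), ha.le, hs2]
    rwa [intervalIntegral.integral_const_mul] at this
  linarith
end

section
/- Let U ⊆ ℝ^m be open, let a, b > 0, d₁ ∈ ℝ, and k > d₁. Let L : U × ℝ^m → ℝ, let θ : U → (ℝ^m)^* be continuous and ψ : U → ℝ be continuous, and assume: L(x,v) ≥ (a/2)‖v‖² + θ(x)(v) + ψ(x) for all (x,v) ∈ U × ℝ^m; ψ(x) ≥ −d₁ for all x ∈ U; and |∮_γ θ| ≤ b·ℓ(γ)² for every closed absolutely continuous curve γ in U. Fix ℓ₀ with 0 < ℓ₀ < √(a(k−d₁)/(2b²)), and set c := ℓ₀·(√(2a(k−d₁)) − b·ℓ₀) > 0. Suppose that for each s ∈ [0,1] we are given T_s > 0 and an absolutely continuous loop x_s : [0,1] → U with x_s(0) = x_s(1), square-integrable derivative, and u ↦ L(x_s(u), x_s′(u)/T_s) integrable; let A(s) := ∫₀¹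 T_s·(L(x_s(u), x_s′(u)/T_s) + k) du be the free-time action and ℓ(s) := ∫₀¹ ‖x_s′(u)‖ du the length. If s ↦ ℓ(s) is continuous on [0,1], ℓ(0) = 0, and A(1) < 0, then there exists s ∈ [0,1] with A(s) ≥ c; in particular sup_{s∈[0,1]} A(s) ≥ c > 0. -/
open Set MeasureTheory

set_option maxHeartbeats 1000000 in
/-- Mountain-pass geometry of the free-time action functional in a
chart: any continuous (in length) family of loops joining a constant loop
(`ℓ(0) = 0`) to a loop of negative free-time action must contain a loop whose
free-time action is at least `c := ℓ₀(√(2a(k−d₁)) − bℓ₀) > 0`, for any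
`0 < ℓ₀ < √(a(k−d₁)/(2b²))`. -/
theorem stmt_11 {m : ℕ}
    (U : Set (EuclideanSpace ℝ (Fin m))) (hU : IsOpen U)
    (a b d₁ k : ℝ) (ha : 0 < a) (hb : 0 < b) (hk : d₁ < k)
    (L : EuclideanSpace ℝ (Fin m) × EuclideanSpace ℝ (Fin m) → ℝ)
    (θ : EuclideanSpace ℝ (Fin m) → (EuclideanSpace ℝ (Fin m) →L[ℝ] ℝ))
    (hθcont : ContinuousOn θ U)
    (ψ : EuclideanSpace ℝ (Fin m) → ℝ) (hψcont : ContinuousOn ψ U)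
    (hL : ∀ x ∈ U, ∀ v : EuclideanSpace ℝ (Fin m),
      a / 2 * ‖v‖ ^ 2 + θ x v + ψ x ≤ L (x, v))
    (hψ : ∀ x ∈ U, -d₁ ≤ ψ x)
    (hcirc : ∀ S : ℝ, 0 < S → ∀ γ γ' : ℝ → EuclideanSpace ℝ (Fin m),
      (∀ t ∈ Icc (0:ℝ) S, γ t ∈ U) →
      (∀ t ∈ Icc (0:ℝ) S, γ t = γ 0 + ∫ s in (0:ℝ)..t, γ' s) →
      IntegrableOn γ' (Icc (0:ℝ) S) → γ S = γ 0 →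
      |∫ t in (0:ℝ)..S, θ (γ t) (γ' t)| ≤ b * (∫ t in (0:ℝ)..S, ‖γ' t‖) ^ 2)
    (ℓ₀ c : ℝ) (hℓ₀pos : 0 < ℓ₀)
    (hℓ₀lt : ℓ₀ < Real.sqrt (a * (k - d₁) / (2 * b ^ 2)))
    (hc : c = ℓ₀ * (Real.sqrt (2 * a * (k - d₁)) - b * ℓ₀))
    (T : ℝ → ℝ) (x x' : ℝ → ℝ → EuclideanSpace ℝ (Fin m))
    (hTpos : ∀ s ∈ Icc (0:ℝ) 1, 0 < T s)
    (hloop : ∀ s ∈ Icc (0:ℝ) 1, x s 1 = x s 0)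
    (hxU : ∀ s ∈ Icc (0:ℝ) 1, ∀ u ∈ Icc (0:ℝ) 1, x s u ∈ U)
    (hxac : ∀ s ∈ Icc (0:ℝ) 1, ∀ u ∈ Icc (0:ℝ) 1, x s u = x s 0 + ∫ r in (0:ℝ)..u, x' s r)
    (hx'int : ∀ s ∈ Icc (0:ℝ) 1, IntegrableOn (x' s) (Icc (0:ℝ) 1))
    (hx'L2 : ∀ s ∈ Icc (0:ℝ) 1, IntegrableOn (fun u => ‖x' s u‖ ^ 2) (Icc (0:ℝ) 1))
    (hLint : ∀ s ∈ Icc (0:ℝ) 1,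
      IntegrableOn (fun u => L (x s u, (T s)⁻¹ • x' s u)) (Icc (0:ℝ) 1))
    (A ℓ : ℝ → ℝ)
    (hA : ∀ s ∈ Icc (0:ℝ) 1,
      A s = ∫ u in (0:ℝ)..1, T s * (L (x s u, (T s)⁻¹ • x' s u) + k))
    (hℓ : ∀ s ∈ Icc (0:ℝ) 1, ℓ s = ∫ u in (0:ℝ)..1, ‖x' s u‖)
    (hℓcont : ContinuousOn ℓ (Icc (0:ℝ) 1))
    (hℓ0 : ℓ 0 = 0) (hA1 : A 1 < 0) :
    0 < c ∧ ∃ s ∈ Icc (0:ℝ) 1, c ≤ A s := by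
  have hK : 0 < k - d₁ := sub_pos.2 hk
  set r : ℝ := Real.sqrt (2 * a * (k - d₁)) with hrdef
  have hr2 : r ^ 2 = 2 * a * (k - d₁) := Real.sq_sqrt (by positivity)
  have hrpos : 0 < r := Real.sqrt_pos.2 (by positivity)
  -- `2 b ℓ₀ < r`
  have h2b : 2 * b * ℓ₀ < r := by
    have h1 : ℓ₀ ^ 2 < a * (k - d₁) / (2 * b ^ 2) :=
      (Real.lt_sqrt hℓ₀pos.le).1 hℓ₀lt
    have : (2 * b * ℓ₀) ^ 2 < 2 * a * (k - d₁) := by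
      have h2 : ℓ₀ ^ 2 * (2 * b ^ 2) < a * (k - d₁) := by
        rw [div_eq_mul_inv] at h1
        have := (lt_div_iff₀ (by positivity : (0:ℝ) < 2 * b ^ 2)).1
          (by rw [div_eq_mul_inv]; exact h1)
        linarith
      nlinarith
    exact Real.lt_sqrt_of_sq_lt this
  have hcpos : 0 < c := by
    rw [hc]
    have : b * ℓ₀ < r := by nlinarith
    exact mul_pos hℓ₀pos (by linarith)
  -- the key lower bound `r ℓ(s) - b ℓ(s)² ≤ A s`
  have hsub : Ioc (0:ℝ) 1 ⊆ Icc (0:ℝ) 1 := Ioc_subset_Icc_self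
  have hms : MeasurableSet (Ioc (0:ℝ) 1) := measurableSet_Ioc
  have hvol : (volume (Ioc (0:ℝ) 1)).toReal = 1 := by
    simp [Real.volume_Ioc]
  have key : ∀ s ∈ Icc (0:ℝ) 1, r * ℓ s - b * (ℓ s) ^ 2 ≤ A s := by
    intro s hs
    have hτ : 0 < T s := hTpos s hs
    set τ := T s with hτdef
    have hx'i := hx'int s hs
    -- continuity of the loop
    have hxcont : ContinuousOn (x s) (Icc (0:ℝ) 1) := by
      have hprim : ContinuousOn (fun u => ∫ r in (0:ℝ)..u, x' s r) (Icc (0:ℝ) 1) := by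
        have := intervalIntegral.continuousOn_primitive_interval (a := 0) (b := 1)
          (μ := volume) (f := x' s)
          (by simpa [uIcc_of_le (zero_le_one : (0:ℝ) ≤ 1)] using hx'i)
        simpa [uIcc_of_le (zero_le_one : (0:ℝ) ≤ 1)] using this
      exact (continuousOn_const.add hprim).congr (fun u hu => hxac s hs u hu)
    have hmaps : MapsTo (x s) (Icc (0:ℝ) 1) U := fun u hu => hxU s hs u hu
    have hθx : ContinuousOn (fun u => θ (x s u)) (Icc (0:ℝ) 1) := hθcont.comp hxcont hmaps
    obtain ⟨C, hC⟩ := isCompact_Icc.exists_bound_of_continuousOn hθx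
    -- integrability of the circulation integrand
    have hθterm_meas : AEStronglyMeasurable (fun u => θ (x s u) (x' s u))
        (volume.restrict (Icc (0:ℝ) 1)) := by
      have hpair : AEStronglyMeasurable (fun u => (θ (x s u), x' s u))
          (volume.restrict (Icc (0:ℝ) 1)) :=
        (hθx.aestronglyMeasurable measurableSet_Icc).prodMk hx'i.1
      exact isBoundedBilinearMap_apply.continuous.comp_aestronglyMeasurable hpair
    have hθint : IntegrableOn (fun u => θ (x s u) (x' s u)) (Icc (0:ℝ) 1) := by
      refine Integrable.mono' (hx'i.norm.const_mul C) hθterm_meas ?_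
      filter_upwards [ae_restrict_mem measurableSet_Icc] with u hu
      calc ‖θ (x s u) (x' s u)‖ ≤ ‖θ (x s u)‖ * ‖x' s u‖ := (θ (x s u)).le_opNorm _
        _ ≤ C * ‖x' s u‖ := mul_le_mul_of_nonneg_right (hC u hu) (norm_nonneg _)
    have hψint : IntegrableOn (fun u => ψ (x s u)) (Icc (0:ℝ) 1) :=
      (hψcont.comp hxcont hmaps).integrableOn_compact isCompact_Icc
    -- all integrands on `Ioc 0 1`
    have hI1 : IntegrableOn (fun u => ‖x' s u‖ ^ 2) (Ioc (0:ℝ) 1) :=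
      (hx'L2 s hs).mono_set hsub
    have hI2 : IntegrableOn (fun u => θ (x s u) (x' s u)) (Ioc (0:ℝ) 1) :=
      hθint.mono_set hsub
    have hI3 : IntegrableOn (fun u => ψ (x s u)) (Ioc (0:ℝ) 1) := hψint.mono_set hsub
    have hIf : IntegrableOn (fun u => ‖x' s u‖) (Ioc (0:ℝ) 1) := (hx'i.mono_set hsub).norm
    have hIc : ∀ (d : ℝ), IntegrableOn (fun _ : ℝ => d) (Ioc (0:ℝ) 1) := fun d =>
      integrableOn_const measure_Ioc_lt_top.ne enorm_ne_top
    have hIL : IntegrableOn (fun u => τ * (L (x s u, τ⁻¹ • x' s u) + k)) (Ioc (0:ℝ) 1) :=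
      ((((hLint s hs).mono_set hsub).add (hIc k)).const_mul τ)
    -- basic quantities
    have hℓs : ℓ s = ∫ u in Ioc (0:ℝ) 1, ‖x' s u‖ := by
      rw [hℓ s hs, intervalIntegral.integral_of_le zero_le_one]
    have hℓnn : 0 ≤ ℓ s := by
      rw [hℓs]; exact setIntegral_nonneg hms fun u _ => norm_nonneg _
    have hAs : A s = ∫ u in Ioc (0:ℝ) 1, τ * (L (x s u, τ⁻¹ • x' s u) + k) := by
      rw [hA s hs, intervalIntegral.integral_of_le zero_le_one]
    -- pointwise estimate
    have hpt : ∀ u ∈ Ioc (0:ℝ) 1,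
        a / (2 * τ) * ‖x' s u‖ ^ 2 + θ (x s u) (x' s u) + τ * (ψ (x s u) + k)
          ≤ τ * (L (x s u, τ⁻¹ • x' s u) + k) := by
      intro u hu
      have hu' : u ∈ Icc (0:ℝ) 1 := hsub hu
      have hxu : x s u ∈ U := hxU s hs u hu'
      have h := hL _ hxu (τ⁻¹ • x' s u)
      have hnorm : ‖τ⁻¹ • x' s u‖ ^ 2 = τ⁻¹ ^ 2 * ‖x' s u‖ ^ 2 := by
        rw [norm_smul, Real.norm_eq_abs, abs_of_pos (inv_pos.2 hτ)]; ring
      have happ : θ (x s u) (τ⁻¹ • x' s u) = τ⁻¹ * θ (x s u) (x' s u) := by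
        rw [_root_.map_smul, smul_eq_mul]
      rw [hnorm, happ] at h
      have h2 := mul_le_mul_of_nonneg_left h hτ.le
      have heq : τ * (a / 2 * (τ⁻¹ ^ 2 * ‖x' s u‖ ^ 2) + τ⁻¹ * θ (x s u) (x' s u) + ψ (x s u))
          = a / (2 * τ) * ‖x' s u‖ ^ 2 + θ (x s u) (x' s u) + τ * ψ (x s u) := by
        field_simp
      rw [heq] at h2
      nlinarith [h2]
    -- integral estimate
    have hIlhs : IntegrableOn (fun u =>
        a / (2 * τ) * ‖x' s u‖ ^ 2 + θ (x s u) (x' s u) + τ * (ψ (x s u) + k))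
        (Ioc (0:ℝ) 1) :=
      ((hI1.const_mul _).add hI2).add ((hI3.add (hIc k)).const_mul τ)
    have hmono : ∫ u in Ioc (0:ℝ) 1,
        (a / (2 * τ) * ‖x' s u‖ ^ 2 + θ (x s u) (x' s u) + τ * (ψ (x s u) + k)) ≤ A s := by
      rw [hAs]; exact setIntegral_mono_on hIlhs hIL hms hpt
    have hsplit : ∫ u in Ioc (0:ℝ) 1,
        (a / (2 * τ) * ‖x' s u‖ ^ 2 + θ (x s u) (x' s u) + τ * (ψ (x s u) + k))
        = a / (2 * τ) * (∫ u in Ioc (0:ℝ) 1, ‖x' s u‖ ^ 2)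
          + (∫ u in Ioc (0:ℝ) 1, θ (x s u) (x' s u))
          + τ * (∫ u in Ioc (0:ℝ) 1, (ψ (x s u) + k)) := by
      have hg1 : IntegrableOn (fun u => a / (2 * τ) * ‖x' s u‖ ^ 2) (Ioc (0:ℝ) 1) :=
        hI1.const_mul _
      have hg12 : IntegrableOn
          (fun u => a / (2 * τ) * ‖x' s u‖ ^ 2 + θ (x s u) (x' s u)) (Ioc (0:ℝ) 1) :=
        hg1.add hI2
      have hg3 : IntegrableOn (fun u => τ * (ψ (x s u) + k)) (Ioc (0:ℝ) 1) :=
        (hI3.add (hIc k)).const_mul τ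
      rw [integral_add hg12 hg3, integral_add hg1 hI2, integral_const_mul, integral_const_mul]
    -- Cauchy–Schwarz : `ℓ(s)² ≤ ∫ ‖x'‖²`
    have hCS : (ℓ s) ^ 2 ≤ ∫ u in Ioc (0:ℝ) 1, ‖x' s u‖ ^ 2 := by
      have h0 : 0 ≤ ∫ u in Ioc (0:ℝ) 1, (‖x' s u‖ - ℓ s) ^ 2 :=
        setIntegral_nonneg hms fun u _ => sq_nonneg _
      have hexp : ∫ u in Ioc (0:ℝ) 1, (‖x' s u‖ - ℓ s) ^ 2
          = (∫ u in Ioc (0:ℝ) 1, ‖x' s u‖ ^ 2) - (ℓ s) ^ 2 := by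
        have heq : ∀ u, (‖x' s u‖ - ℓ s) ^ 2
            = ‖x' s u‖ ^ 2 - (2 * ℓ s) * ‖x' s u‖ + (ℓ s) ^ 2 := fun u => by ring
        simp_rw [heq]
        have hg1 : IntegrableOn (fun u => (2 * ℓ s) * ‖x' s u‖) (Ioc (0:ℝ) 1) :=
          hIf.const_mul _
        have hg2 : IntegrableOn
            (fun u => ‖x' s u‖ ^ 2 - (2 * ℓ s) * ‖x' s u‖) (Ioc (0:ℝ) 1) := hI1.sub hg1
        rw [integral_add hg2 (hIc _), integral_sub hI1 hg1, integral_const_mul,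
          setIntegral_const, measureReal_def, hvol, ← hℓs]
        simp
        ring
      linarith [hexp ▸ h0]
    -- circulation bound
    have hcθ : -(b * (ℓ s) ^ 2) ≤ ∫ u in Ioc (0:ℝ) 1, θ (x s u) (x' s u) := by
      have h := hcirc 1 one_pos (x s) (x' s) (hxU s hs) (hxac s hs) hx'i (hloop s hs)
      rw [intervalIntegral.integral_of_le zero_le_one] at h
      have hlen : (∫ t in (0:ℝ)..1, ‖x' s t‖) = ℓ s := (hℓ s hs).symm
      rw [hlen] at h
      have := neg_abs_le (∫ u in Ioc (0:ℝ) 1, θ (x s u) (x' s u))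
      linarith [abs_nonneg (∫ u in Ioc (0:ℝ) 1, θ (x s u) (x' s u))]
    -- potential bound
    have hψpart : k - d₁ ≤ ∫ u in Ioc (0:ℝ) 1, (ψ (x s u) + k) := by
      have hconst : ∫ _u in Ioc (0:ℝ) 1, (k - d₁) = k - d₁ := by
        rw [setIntegral_const, measureReal_def, hvol]; simp
      rw [← hconst]
      refine setIntegral_mono_on (hIc _) (hI3.add (hIc k)) hms fun u hu => ?_
      have := hψ _ (hxU s hs u (hsub hu))
      linarith
    -- AM–GM
    have hAM : r * ℓ s ≤ a / (2 * τ) * (ℓ s) ^ 2 + τ * (k - d₁) := by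
      have key2 : 2 * τ * (r * ℓ s) ≤ a * (ℓ s) ^ 2 + 2 * τ ^ 2 * (k - d₁) := by
        nlinarith [sq_nonneg (r * ℓ s - 2 * (k - d₁) * τ), hr2, hK]
      have heq : a / (2 * τ) * (ℓ s) ^ 2 + τ * (k - d₁)
          = (a * (ℓ s) ^ 2 + 2 * τ ^ 2 * (k - d₁)) / (2 * τ) := by
        field_simp
      rw [heq, le_div_iff₀ (by positivity : (0:ℝ) < 2 * τ)]
      nlinarith [key2]
    -- put everything together
    have h1 : a / (2 * τ) * (ℓ s) ^ 2 ≤ a / (2 * τ) * (∫ u in Ioc (0:ℝ) 1, ‖x' s u‖ ^ 2) :=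
      mul_le_mul_of_nonneg_left hCS (by positivity)
    have h3 : τ * (k - d₁) ≤ τ * (∫ u in Ioc (0:ℝ) 1, (ψ (x s u) + k)) :=
      mul_le_mul_of_nonneg_left hψpart hτ.le
    nlinarith [hmono, hsplit ▸ hmono, h1, h3, hcθ, hAM]
  -- `ℓ₀ ≤ ℓ 1`
  have h1mem : (1:ℝ) ∈ Icc (0:ℝ) 1 := right_mem_Icc.2 zero_le_one
  have hℓ1nn : 0 ≤ ℓ 1 := by
    rw [hℓ 1 h1mem]
    exact intervalIntegral.integral_nonneg zero_le_one fun u _ => norm_nonneg _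
  have hℓ1 : ℓ₀ ≤ ℓ 1 := by
    by_contra hlt
    push_neg at hlt
    have hkey := key 1 h1mem
    have hfac : 0 ≤ ℓ 1 * (r - b * ℓ 1) := by
      refine mul_nonneg hℓ1nn ?_
      nlinarith [h2b, hb, hlt, hℓ1nn]
    nlinarith [hkey, hA1, hfac]
  obtain ⟨s₁, hs₁, hℓs₁⟩ := intermediate_value_Icc zero_le_one hℓcont
    ⟨by rw [hℓ0]; exact hℓ₀pos.le, hℓ1⟩
  refine ⟨hcpos, s₁, hs₁, ?_⟩
  have hks := key s₁ hs₁
  rw [hℓs₁] at hks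
  rw [hc]
  nlinarith [hks]
end

section
/- Let L : ℝ^n × ℝ^n → ℝ be continuous with L(x + h, v) = L(x, v) for all h ∈ ℤ^n and all (x,v) (ℤ^n-periodicity in the first variable), and assume there are a₁ > 0 and a₂ ≥ 0 with L(x,v) ≥ a₁‖v‖² − a₂ for all (x,v). Let k ∈ ℝ and suppose that A_{L+k}(γ) ≥ 0 for every closed absolutely continuous curve γ : [0,T] → ℝ^n (any T > 0, γ(T) = γ(0)) with square-integrable derivative and with t ↦ L(γ(t),γ̇(t)) integrable. Then for every h ∈ ℤ^n there is a constant C ∈ ℝ such that A_{L+k}(x) ≥ C for every T > 0 and every absolutely continuous curve x : [0,T] → ℝ^n with square-integrable derivative, t ↦ L(x(t),ẋ(t)) integrable, and x(T) = x(0) + h. -/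
open Set MeasureTheory

/-- For a continuous `ℤ^n`-periodic Lagrangian on `ℝ^n` with
superquadratic lower bound, if the `(L+k)`-action of every closed absolutely
continuous curve is nonnegative (i.e. `k ≥ c_u`), then for every integer homology
class `h` the `(L+k)`-action is bounded below on the class of curves `x` with
`x(T) = x(0) + h`. -/
theorem stmt_19 {n : ℕ}
    (L : EuclideanSpace ℝ (Fin n) × EuclideanSpace ℝ (Fin n) → ℝ)
    (hLcont : Continuous L)
    (hper : ∀ h : Fin n → ℤ, ∀ x v : EuclideanSpace ℝ (Fin n),
      L (x + (EuclideanSpace.equiv (Fin n) ℝ).symm (fun i => (h i : ℝ)), v) = L (x, v))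
    (a₁ a₂ : ℝ) (ha₁ : 0 < a₁) (ha₂ : 0 ≤ a₂)
    (hgrowth : ∀ x v : EuclideanSpace ℝ (Fin n), a₁ * ‖v‖ ^ 2 - a₂ ≤ L (x, v))
    (k : ℝ)
    (hnonneg : ∀ T : ℝ, 0 < T → ∀ γ γ' : ℝ → EuclideanSpace ℝ (Fin n),
      (∀ t ∈ Icc (0:ℝ) T, γ t = γ 0 + ∫ s in (0:ℝ)..t, γ' s) →
      IntegrableOn γ' (Icc (0:ℝ) T) →
      IntegrableOn (fun t => ‖γ' t‖ ^ 2) (Icc (0:ℝ) T) →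
      IntegrableOn (fun t => L (γ t, γ' t)) (Icc (0:ℝ) T) →
      γ T = γ 0 →
      0 ≤ ∫ t in (0:ℝ)..T, (L (γ t, γ' t) + k)) :
    ∀ h : Fin n → ℤ, ∃ C : ℝ, ∀ T : ℝ, 0 < T →
      ∀ x x' : ℝ → EuclideanSpace ℝ (Fin n),
        (∀ t ∈ Icc (0:ℝ) T, x t = x 0 + ∫ s in (0:ℝ)..t, x' s) →
        IntegrableOn x' (Icc (0:ℝ) T) →
        IntegrableOn (fun t => ‖x' t‖ ^ 2) (Icc (0:ℝ) T) →
        IntegrableOn (fun t => L (x t, x' t)) (Icc (0:ℝ) T) →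
        x T = x 0 + (EuclideanSpace.equiv (Fin n) ℝ).symm (fun i => (h i : ℝ)) →
        C ≤ ∫ t in (0:ℝ)..T, (L (x t, x' t) + k) := by
  intro h
  set hv : EuclideanSpace ℝ (Fin n) :=
    (EuclideanSpace.equiv (Fin n) ℝ).symm (fun i => (h i : ℝ)) with hv_def
  -- Step 1: by periodicity and continuity, `p ↦ L (p, -hv)` is bounded above.
  obtain ⟨M, hM⟩ : ∃ M : ℝ, ∀ p : EuclideanSpace ℝ (Fin n), L (p, -hv) ≤ M := by
    have hcont : Continuous fun p : EuclideanSpace ℝ (Fin n) => L (p, -hv) :=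
      hLcont.comp (continuous_id.prodMk continuous_const)
    obtain ⟨p₀, -, hp₀⟩ :=
      (isCompact_closedBall (0 : EuclideanSpace ℝ (Fin n)) n).exists_isMaxOn
        ⟨0, Metric.mem_closedBall_self (by positivity)⟩ hcont.continuousOn
    refine ⟨L (p₀, -hv), fun p => ?_⟩
    set m : Fin n → ℤ := fun i => ⌊p i⌋ with hm
    set q : EuclideanSpace ℝ (Fin n) :=
      p - (EuclideanSpace.equiv (Fin n) ℝ).symm (fun i => (m i : ℝ)) with hq
    have hqp : L (p, -hv) = L (q, -hv) := by
      have hp := hper m q (-hv)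
      rw [← hp]
      congr 2
      simp [hq]
    rw [hqp]
    apply hp₀
    rw [Metric.mem_closedBall, dist_zero_right, EuclideanSpace.norm_eq]
    have hqi : ∀ i, ‖q i‖ ^ 2 ≤ 1 := by
      intro i
      have hqi' : q i = p i - (⌊p i⌋ : ℝ) := by
        rw [hq]
        simp [hm]
      rw [hqi', Real.norm_eq_abs, abs_of_nonneg (by linarith [Int.floor_le (p i)])]
      nlinarith [Int.lt_floor_add_one (p i), Int.floor_le (p i)]
    have hsum : (∑ i, ‖q i‖ ^ 2) ≤ (n : ℝ) := by
      calc (∑ i, ‖q i‖ ^ 2) ≤ ∑ _i : Fin n, (1:ℝ) :=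
            Finset.sum_le_sum fun i _ => hqi i
        _ = n := by simp
    have hnle : (n : ℝ) ≤ (n : ℝ) ^ 2 := by
      exact_mod_cast Nat.le_self_pow two_ne_zero n
    calc Real.sqrt (∑ i, ‖q i‖ ^ 2) ≤ Real.sqrt ((n : ℝ) ^ 2) :=
          Real.sqrt_le_sqrt (by linarith)
      _ = n := Real.sqrt_sq (Nat.cast_nonneg n)
  refine ⟨-(M + k), ?_⟩
  intro T hT x x' hx hI1 hI2 hI3 hxT
  -- Step 2: close up the curve by a straight segment back, over time `[T, T+1]`.
  set γ : ℝ → EuclideanSpace ℝ (Fin n) :=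
    fun t => if t ≤ T then x t else x T - (t - T) • hv with hγ
  set γ' : ℝ → EuclideanSpace ℝ (Fin n) :=
    fun t => if t ≤ T then x' t else -hv with hγ'
  have hT1 : (0:ℝ) < T + 1 := by linarith
  have hIccsplit : Icc (0:ℝ) (T + 1) = Icc 0 T ∪ Ioc T (T + 1) :=
    (Icc_union_Ioc_eq_Icc hT.le (by linarith)).symm
  have hEq1 : EqOn x' γ' (Icc (0:ℝ) T) := fun s hs => by simp [hγ', hs.2]
  have hEq1' : EqOn (fun _ : ℝ => -hv) γ' (Ioc T (T + 1)) := fun s hs => by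
    simp [hγ', not_le.2 hs.1]
  -- integrability of γ'
  have hJ1 : IntegrableOn γ' (Icc (0:ℝ) (T + 1)) := by
    rw [hIccsplit]
    refine (hI1.congr_fun hEq1 measurableSet_Icc).union ?_
    exact ((integrableOn_const measure_Ioc_lt_top.ne).congr_fun hEq1'
      measurableSet_Ioc)
  -- integrability of ‖γ'‖²
  have hJ2 : IntegrableOn (fun t => ‖γ' t‖ ^ 2) (Icc (0:ℝ) (T + 1)) := by
    rw [hIccsplit]
    refine (hI2.congr_fun (fun s hs => by simp [hγ', hs.2]) measurableSet_Icc).union ?_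
    have hc : IntegrableOn (fun _ : ℝ => ‖hv‖ ^ 2) (Ioc T (T + 1)) volume :=
      integrableOn_const measure_Ioc_lt_top.ne
    exact hc.congr_fun (fun s hs => by simp [hγ', not_le.2 hs.1]) measurableSet_Ioc
  -- the Lagrangian along the return segment
  set g : ℝ → ℝ := fun t => L (x T - (t - T) • hv, -hv) with hg
  have hgc : Continuous g := by
    apply hLcont.comp
    exact (continuous_const.sub ((continuous_id.sub continuous_const).smul
      continuous_const)).prodMk continuous_const
  have hEq3 : EqOn (fun t => L (x t, x' t)) (fun t => L (γ t, γ' t)) (Icc (0:ℝ) T) :=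
    fun s hs => by simp [hγ, hγ', hs.2]
  have hEq3' : EqOn g (fun t => L (γ t, γ' t)) (Ioc T (T + 1)) := fun s hs => by
    simp [hγ, hγ', hg, not_le.2 hs.1]
  have hJ3 : IntegrableOn (fun t => L (γ t, γ' t)) (Icc (0:ℝ) (T + 1)) := by
    rw [hIccsplit]
    refine (hI3.congr_fun hEq3 measurableSet_Icc).union ?_
    exact ((hgc.integrableOn_Icc.mono_set Ioc_subset_Icc_self).congr_fun hEq3'
      measurableSet_Ioc)
  have hγ0 : γ 0 = x 0 := by simp [hγ, hT.le]
  -- the total displacement of x is hv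
  have hint : (∫ s in (0:ℝ)..T, x' s) = hv := by
    have h1 := hx T ⟨hT.le, le_refl T⟩
    rw [hxT] at h1
    exact (add_left_cancel h1).symm
  -- the curve condition for γ
  have hγeq : ∀ t ∈ Icc (0:ℝ) (T + 1), γ t = γ 0 + ∫ s in (0:ℝ)..t, γ' s := by
    intro t ht
    by_cases hle : t ≤ T
    · have hcongr : (∫ s in (0:ℝ)..t, γ' s) = ∫ s in (0:ℝ)..t, x' s :=
        intervalIntegral.integral_congr fun s hs => by
          rw [uIcc_of_le ht.1] at hs
          exact (hEq1 ⟨hs.1, hs.2.trans hle⟩).symm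
      have : γ t = x t := by simp [hγ, hle]
      rw [this, hcongr, hγ0]
      exact hx t ⟨ht.1, hle⟩
    · push_neg at hle
      have hii1 : IntervalIntegrable γ' volume 0 T := by
        rw [intervalIntegrable_iff_integrableOn_Icc_of_le hT.le]
        exact hJ1.mono_set (Icc_subset_Icc le_rfl (by linarith))
      have hii2 : IntervalIntegrable γ' volume T t := by
        rw [intervalIntegrable_iff_integrableOn_Icc_of_le hle.le]
        exact hJ1.mono_set (Icc_subset_Icc hT.le ht.2)
      have hsplit : (∫ s in (0:ℝ)..t, γ' s)
          = (∫ s in (0:ℝ)..T, γ' s) + ∫ s in T..t, γ' s :=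
        (intervalIntegral.integral_add_adjacent_intervals hii1 hii2).symm
      have hA : (∫ s in (0:ℝ)..T, γ' s) = hv := by
        have hcgr : (∫ s in (0:ℝ)..T, γ' s) = ∫ s in (0:ℝ)..T, x' s :=
          intervalIntegral.integral_congr fun s hs => by
            rw [uIcc_of_le hT.le] at hs
            exact (hEq1 hs).symm
        rw [hcgr]; exact hint
      have hB : (∫ s in T..t, γ' s) = (t - T) • (-hv) := by
        have hcgr : (∫ s in T..t, γ' s) = ∫ s in T..t, (-hv) :=
          intervalIntegral.integral_congr_ae (Filter.Eventually.of_forall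
            fun s hs => by
              rw [uIoc_of_le hle.le] at hs
              simp [hγ', not_le.2 hs.1])
        rw [hcgr, intervalIntegral.integral_const]
      have hγt : γ t = x T - (t - T) • hv := by simp [hγ, not_le.2 hle]
      rw [hγt, hγ0, hsplit, hA, hB, hxT, smul_neg]
      abel
  -- the curve γ is closed
  have hclosed : γ (T + 1) = γ 0 := by
    have hne : ¬ (T + 1 ≤ T) := by linarith
    have h1 : (T + 1 - T : ℝ) = 1 := by ring
    rw [hγ0]
    simp only [hγ, if_neg hne, h1, one_smul, hxT]
    abel
  have key := hnonneg (T + 1) hT1 γ γ' hγeq hJ1 hJ2 hJ3 hclosed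
  -- split the action integral
  have hiia : IntervalIntegrable (fun t => L (γ t, γ' t) + k) volume 0 T := by
    apply IntervalIntegrable.add _ intervalIntegrable_const
    rw [intervalIntegrable_iff_integrableOn_Icc_of_le hT.le]
    exact hJ3.mono_set (Icc_subset_Icc le_rfl (by linarith))
  have hiib : IntervalIntegrable (fun t => L (γ t, γ' t) + k) volume T (T + 1) := by
    apply IntervalIntegrable.add _ intervalIntegrable_const
    rw [intervalIntegrable_iff_integrableOn_Icc_of_le (by linarith : T ≤ T + 1)]
    exact hJ3.mono_set (Icc_subset_Icc hT.le le_rfl)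
  have hsplit2 : (∫ t in (0:ℝ)..(T + 1), (L (γ t, γ' t) + k))
      = (∫ t in (0:ℝ)..T, (L (γ t, γ' t) + k))
        + ∫ t in T..(T + 1), (L (γ t, γ' t) + k) :=
    (intervalIntegral.integral_add_adjacent_intervals hiia hiib).symm
  have hfirst : (∫ t in (0:ℝ)..T, (L (γ t, γ' t) + k))
      = ∫ t in (0:ℝ)..T, (L (x t, x' t) + k) := by
    apply intervalIntegral.integral_congr
    intro s hs
    rw [uIcc_of_le hT.le] at hs
    exact congrArg (fun r => r + k) (hEq3 hs).symm
  have hsecond : (∫ t in T..(T + 1), (L (γ t, γ' t) + k)) ≤ M + k := by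
    have heq : (∫ t in T..(T + 1), (L (γ t, γ' t) + k))
        = ∫ t in T..(T + 1), (g t + k) := by
      apply intervalIntegral.integral_congr_ae
      refine Filter.Eventually.of_forall fun s hs => ?_
      rw [uIoc_of_le (by linarith : T ≤ T + 1)] at hs
      exact congrArg (fun r => r + k) (hEq3' hs).symm
    rw [heq]
    have hconst : (∫ _t in T..(T + 1), (M + k)) = M + k := by
      rw [intervalIntegral.integral_const, smul_eq_mul]
      ring
    rw [← hconst]
    apply intervalIntegral.integral_mono_on (by linarith : T ≤ T + 1)
    · exact (hgc.intervalIntegrable _ _).add intervalIntegrable_const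
    · exact intervalIntegrable_const
    · intro s _
      exact add_le_add_left (hM _) k
  rw [hsplit2, hfirst] at key
  linarith
end
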